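/- arXiv:2604.06651 — 7 statements merged into one kernel-verified Lean document; each statement's English description precedes it below -/
import Mathlib

section
/- For every a > 0 and ε > 0, the function f_{ε,a} : ℝ² → ℝ defined by f_{ε,a}(x₁,x₂) = F(√(x₁²+x₂²)) + (ε/2)·((x₁ − a)₊)² is convex and continuously differentiable on ℝ², its gradient vanishes at the origin, and the origin is its unique minimizer. -/
/-- `F(0) = 0`, `F(r) = ∫₀^r du/(−log u)` for `0 < r ≤ e⁻²`,
`F(r) = F(e⁻²) + (1/2)(r − e⁻²)` for `r ≥ e⁻²`. -/
noncomputable def F (r : ℝ) : ℝ :=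
  if r ≤ Real.exp (-2) then ∫ u in (0:ℝ)..r, 1 / (-Real.log u)
  else (∫ u in (0:ℝ)..Real.exp (-2), 1 / (-Real.log u)) + (1/2) * (r - Real.exp (-2))

/-- `f_{ε,a}(x₁,x₂) = F(√(x₁²+x₂²)) + (ε/2)·((x₁ − a)₊)²`. -/
noncomputable def feps (ε a : ℝ) (x : EuclideanSpace ℝ (Fin 2)) : ℝ :=
  F (Real.sqrt ((x 0)^2 + (x 1)^2)) + (ε/2) * (max (x 0 - a) 0)^2

/-!
`F` is the primitive of `F' u = 1/(-log u)` (capped at `1/2` beyond `e⁻²`), which is continuous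
and nondecreasing on `[0, ∞)`, vanishes at `0` and is positive elsewhere. Hence `F` is `C¹`,
convex and strictly increasing on `[0, ∞)`. Composing with the norm keeps convexity because `F`
is nondecreasing, and keeps `C¹` regularity because `F'(0) = 0`: the derivative
`F'(‖x‖) ⟪x / ‖x‖, ·⟫` of `x ↦ F ‖x‖` then tends to `0` at the origin. The penalty
`((x₁ - a)₊)²` is convex and `C¹`, and vanishes near the origin since `a > 0`; so the origin is
a critical point, and it is the unique minimizer because `F ‖x‖ > F 0 = 0` for `x ≠ 0`.
-/

open Real Set Filter Topology Asymptotics MeasureTheory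

theorem continuousAt_inv_log_zero : ContinuousAt (fun u : ℝ => (log u)⁻¹) 0 := by
  rw [← continuousWithinAt_compl_self, ContinuousWithinAt, log_zero, inv_zero]
  exact tendsto_inv_atBot_zero.comp tendsto_log_nhdsNE_zero

section Radial

variable {E : Type*} [NormedAddCommGroup E] [InnerProductSpace ℝ E]

theorem hasFDerivAt_norm_of_ne_zero {x : E} (hx : x ≠ 0) :
    HasFDerivAt (‖·‖) (‖x‖⁻¹ • innerSL ℝ x) x := by
  have h := (hasStrictFDerivAt_norm_sq x).hasFDerivAt.sqrt (by positivity)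
  simp only [sqrt_sq (norm_nonneg _)] at h
  convert h using 1
  rw [← Nat.cast_smul_eq_nsmul ℝ, smul_smul, Nat.cast_ofNat]
  congr 1
  field_simp

theorem hasFDerivAt_comp_norm {g g' : ℝ → ℝ} {x : E} (hg : HasDerivAt g (g' ‖x‖) ‖x‖)
    (hg'0 : g' 0 = 0) :
    HasFDerivAt (fun y : E => g ‖y‖) ((g' ‖x‖ * ‖x‖⁻¹) • innerSL ℝ x) x := by
  rcases eq_or_ne x 0 with rfl | hx
  · rw [norm_zero, hg'0] at hg
    rw [map_zero, smul_zero, hasFDerivAt_iff_isLittleO_nhds_zero]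
    have h : (fun y : E => g ‖y‖ - g 0) =o[𝓝 0] (‖·‖) := by
      simpa [Function.comp_def] using (hasDerivAt_iff_isLittleO_nhds_zero.1 hg).comp_tendsto
        (tendsto_norm_zero : Tendsto (‖·‖) (𝓝 (0 : E)) (𝓝 0))
    simpa using isLittleO_norm_right.1 h
  · rw [← smul_smul]
    exact hg.comp_hasFDerivAt x (hasFDerivAt_norm_of_ne_zero hx)

theorem contDiff_one_comp_norm {g g' : ℝ → ℝ} (hg : ∀ r, 0 ≤ r → HasDerivAt g (g' r) r)
    (hg' : ContinuousOn g' (Ici 0)) (hg'0 : g' 0 = 0) :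
    ContDiff ℝ 1 (fun y : E => g ‖y‖) := by
  have hg'_norm : Continuous fun x : E => g' ‖x‖ :=
    hg'.comp_continuous continuous_norm fun x => norm_nonneg x
  refine contDiff_one_iff_hasFDerivAt.2
    ⟨fun x => (g' ‖x‖ * ‖x‖⁻¹) • innerSL ℝ x, ?_,
      fun x => hasFDerivAt_comp_norm (hg _ (norm_nonneg x)) hg'0⟩
  rw [continuous_iff_continuousAt]
  intro x
  rcases eq_or_ne x 0 with rfl | hx
  · have hbound : ∀ y : E, ‖(g' ‖y‖ * ‖y‖⁻¹) • innerSL ℝ y‖ ≤ |g' ‖y‖| := by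
      intro y
      rcases eq_or_ne y 0 with rfl | hy
      · simp
      · rw [norm_smul, innerSL_apply_norm, norm_mul, norm_inv, norm_norm, Real.norm_eq_abs,
          mul_assoc, inv_mul_cancel₀ (norm_ne_zero_iff.2 hy), mul_one]
    simp only [ContinuousAt, map_zero, smul_zero]
    refine squeeze_zero_norm hbound ?_
    simpa [hg'0] using hg'_norm.abs.tendsto 0
  · exact ((hg'_norm.continuousAt.mul (continuous_norm.continuousAt.inv₀
      (norm_ne_zero_iff.2 hx))).smul (innerSL ℝ).continuous.continuousAt)

theorem convexOn_univ_comp_norm {g : ℝ → ℝ} (hg : ConvexOn ℝ (Ici 0) g)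
    (hg_mono : MonotoneOn g (Ici 0)) : ConvexOn ℝ univ (fun x : E => g ‖x‖) := by
  refine ⟨convex_univ, fun x _ y _ p q hp hq hpq => ?_⟩
  have hxy : 0 ≤ p * ‖x‖ + q * ‖y‖ := by positivity
  calc g ‖p • x + q • y‖ ≤ g (p * ‖x‖ + q * ‖y‖) :=
        hg_mono (norm_nonneg _) hxy (convexOn_univ_norm.2 trivial trivial hp hq hpq)
    _ ≤ p • g ‖x‖ + q • g ‖y‖ := hg.2 (norm_nonneg x) (norm_nonneg y) hp hq hpq

end Radial

-- With `log 0 = 0` and `1 / 0 = 0`, the formula gives `F' 0 = 0`, the continuous extension.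
noncomputable def F' (u : ℝ) : ℝ := if u ≤ exp (-2) then 1 / (-log u) else 1 / 2

theorem two_le_neg_log {u : ℝ} (hu : 0 < u) (hu' : u ≤ exp (-2)) : 2 ≤ -log u := by
  linarith [(log_le_iff_le_exp hu).2 hu']

@[simp]
theorem F'_zero : F' 0 = 0 := by simp [F', (exp_pos _).le]

theorem F'_pos {u : ℝ} (hu : 0 < u) : 0 < F' u := by
  unfold F'
  split_ifs with h
  · have := two_le_neg_log hu h
    positivity
  · norm_num

theorem F'_le_half {u : ℝ} (hu : 0 ≤ u) : F' u ≤ 1 / 2 := by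
  rcases hu.eq_or_lt with rfl | hu
  · norm_num
  unfold F'
  split_ifs with h
  · exact one_div_le_one_div_of_le two_pos (two_le_neg_log hu h)
  · rfl

theorem F'_nonneg {u : ℝ} (hu : 0 ≤ u) : 0 ≤ F' u := by
  rcases hu.eq_or_lt with rfl | hu
  · simp
  · exact (F'_pos hu).le

theorem monotoneOn_F' : MonotoneOn F' (Ici 0) := by
  intro u (hu : 0 ≤ u) v (hv : 0 ≤ v) huv
  by_cases hv' : v ≤ exp (-2)
  · rcases hu.eq_or_lt with rfl | hu
    · simpa using F'_nonneg hv
    have hlog := log_le_log hu huv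
    simp only [F', hv', huv.trans hv', if_true]
    exact one_div_le_one_div_of_le (by linarith [two_le_neg_log (hu.trans_le huv) hv'])
      (by linarith)
  · simpa [F', hv'] using F'_le_half hu

theorem continuousOn_F' : ContinuousOn F' (Ioi (-1)) := by
  have hc : exp (-2) < 1 := Real.exp_lt_one_iff.2 (by norm_num)
  refine ContinuousOn.if ?_ ?_ continuousOn_const
  · rintro u ⟨-, hu⟩
    rw [show {u : ℝ | u ≤ exp (-2)} = Iic (exp (-2)) from rfl, frontier_Iic] at hu
    rw [hu, log_exp]
    norm_num
  · rw [show {u : ℝ | u ≤ exp (-2)} = Iic (exp (-2)) from rfl, closure_Iic]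
    rintro u ⟨hu₁ : -1 < u, hu₂ : u ≤ exp (-2)⟩
    apply ContinuousAt.continuousWithinAt
    simp only [one_div, ← neg_inv]
    refine ContinuousAt.neg ?_
    rcases eq_or_ne u 0 with rfl | hu
    · exact continuousAt_inv_log_zero
    · exact (continuousAt_log hu).inv₀ (log_ne_zero.2 ⟨hu, by linarith, by linarith⟩)

theorem F'_of_exp_neg_two_le {u : ℝ} (hu : exp (-2) ≤ u) : F' u = 1 / 2 := by
  rcases hu.eq_or_lt with rfl | hu
  · simp [F', log_exp]
  · simp [F', not_le.2 hu]

theorem intervalIntegrable_F' {r s : ℝ} (hr : -1 < r) (hs : -1 < s) :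
    IntervalIntegrable F' volume r s :=
  (continuousOn_F'.mono fun _ hu => (lt_min hr hs).trans_le hu.1).intervalIntegrable

theorem F_eq_integral (r : ℝ) : F r = ∫ u in (0 : ℝ)..r, F' u := by
  have hsmall : ∀ {s}, s ≤ exp (-2) →
      ∫ u in (0 : ℝ)..s, 1 / (-log u) = ∫ u in (0 : ℝ)..s, F' u := fun hs =>
    intervalIntegral.integral_congr fun u hu => by
      have : u ≤ exp (-2) := hu.2.trans (max_le (exp_pos _).le hs)
      simp [F', this]
  unfold F
  split_ifs with hr
  · exact hsmall hr
  · have hc := exp_pos (-2)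
    rw [← intervalIntegral.integral_add_adjacent_intervals (b := exp (-2))
      (intervalIntegrable_F' (by norm_num) (by linarith))
      (intervalIntegrable_F' (by linarith) (by linarith)), hsmall le_rfl,
      intervalIntegral.integral_congr (a := exp (-2)) (b := r) (g := fun _ => (1 / 2 : ℝ))
        fun u hu => F'_of_exp_neg_two_le (uIcc_of_le (not_le.1 hr).le ▸ hu).1]
    simp [mul_comm]

@[simp]
theorem F_zero : F 0 = 0 := by simp [F_eq_integral]

theorem hasDerivAt_F {r : ℝ} (hr : -1 < r) : HasDerivAt F (F' r) r := by
  have h := intervalIntegral.integral_hasDerivAt_right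
    (intervalIntegrable_F' (r := 0) (by norm_num) hr)
    (continuousOn_F'.stronglyMeasurableAtFilter isOpen_Ioi r hr)
    (continuousOn_F'.continuousAt (Ioi_mem_nhds hr))
  rwa [← funext F_eq_integral] at h

theorem continuousOn_F : ContinuousOn F (Ici 0) := fun r hr =>
  (hasDerivAt_F (by linarith [mem_Ici.1 hr])).continuousAt.continuousWithinAt

theorem convexOn_F : ConvexOn ℝ (Ici 0) F := by
  refine MonotoneOn.convexOn_of_deriv (convex_Ici 0) continuousOn_F ?_ ?_ <;> rw [interior_Ici]
  · exact fun r (hr : 0 < r) =>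
      (hasDerivAt_F (by linarith)).differentiableAt.differentiableWithinAt
  · intro u (hu : 0 < u) v (hv : 0 < v) huv
    rw [(hasDerivAt_F (by linarith)).deriv, (hasDerivAt_F (by linarith)).deriv]
    exact monotoneOn_F' hu.le hv.le huv

theorem strictMonoOn_F : StrictMonoOn F (Ici 0) := by
  refine strictMonoOn_of_deriv_pos (convex_Ici 0) continuousOn_F fun r hr => ?_
  rw [interior_Ici] at hr
  rw [(hasDerivAt_F (by linarith [mem_Ioi.1 hr])).deriv]
  exact F'_pos hr

theorem hasDerivAt_max_zero_sq (t : ℝ) : HasDerivAt (fun s => max s 0 ^ 2) (2 * max t 0) t := by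
  have hne : ∀ t ≠ 0, HasDerivAt (fun s : ℝ => max s 0 ^ 2) (2 * max t 0) t := by
    intro t ht
    rcases ht.lt_or_gt with ht | ht
    · rw [max_eq_right ht.le, mul_zero]
      exact (hasDerivAt_const t 0).congr_of_eventuallyEq
        ((eventually_lt_nhds ht).mono fun s hs => by simp [max_eq_right hs.le])
    · rw [max_eq_left ht.le]
      simpa using (hasDerivAt_pow 2 t).congr_of_eventuallyEq
        ((eventually_gt_nhds ht).mono fun s hs => by simp [max_eq_left hs.le])
  rcases eq_or_ne t 0 with rfl | ht
  · exact hasDerivAt_of_hasDerivAt_of_ne hne (by fun_prop) (by fun_prop)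
  · exact hne t ht

theorem hasDerivAt_max_sub_sq (a t : ℝ) :
    HasDerivAt (fun s => max (s - a) 0 ^ 2) (2 * max (t - a) 0) t :=
  (hasDerivAt_max_zero_sq (t - a)).comp_sub_const t a

theorem contDiff_max_sub_sq (a : ℝ) : ContDiff ℝ 1 fun s : ℝ => max (s - a) 0 ^ 2 := by
  refine contDiff_one_iff_deriv.2 ⟨fun t => (hasDerivAt_max_sub_sq a t).differentiableAt, ?_⟩
  rw [funext fun t => (hasDerivAt_max_sub_sq a t).deriv]
  fun_prop

theorem convexOn_max_sub_sq (a : ℝ) : ConvexOn ℝ univ fun s : ℝ => max (s - a) 0 ^ 2 := by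
  refine Monotone.convexOn_univ_of_deriv (fun t => (hasDerivAt_max_sub_sq a t).differentiableAt) ?_
  rw [funext fun t => (hasDerivAt_max_sub_sq a t).deriv]
  exact fun s t hst => by dsimp only; gcongr

theorem sqrt_sq_add_sq_eq_norm (x : EuclideanSpace ℝ (Fin 2)) :
    √(x 0 ^ 2 + x 1 ^ 2) = ‖x‖ := by
  simp [EuclideanSpace.norm_eq, Fin.sum_univ_two]

/-- For every `a > 0` and `ε > 0`, the function `f_{ε,a}` is convex and
continuously differentiable on `ℝ²`, its gradient vanishes at the origin, and the origin
is its unique minimizer. -/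
theorem feps_convex_C1_unique_minimizer (a ε : ℝ) (ha : 0 < a) (hε : 0 < ε) :
    ConvexOn ℝ Set.univ (feps ε a) ∧
    ContDiff ℝ 1 (feps ε a) ∧
    gradient (feps ε a) 0 = 0 ∧
    (∀ x : EuclideanSpace ℝ (Fin 2), x ≠ 0 → feps ε a 0 < feps ε a x) := by
  have hfeps : feps ε a = fun x => F ‖x‖ + ε / 2 * max (x 0 - a) 0 ^ 2 :=
    funext fun x => by rw [feps, sqrt_sq_add_sq_eq_norm]
  have hF : ∀ r, 0 ≤ r → HasDerivAt F (F' r) r := fun r hr => hasDerivAt_F (by linarith)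
  let x₀ : EuclideanSpace ℝ (Fin 2) →L[ℝ] ℝ := EuclideanSpace.proj 0
  rw [hfeps]
  refine ⟨?convex, ?smooth, ?critical, ?minimum⟩
  · exact (convexOn_univ_comp_norm convexOn_F strictMonoOn_F.monotoneOn).add
      (((convexOn_max_sub_sq a).comp_linearMap x₀.toLinearMap).smul (by positivity))
  · exact (contDiff_one_comp_norm hF (continuousOn_F'.mono (Ici_subset_Ioi.2 (by norm_num)))
      F'_zero).add (contDiff_const.mul ((contDiff_max_sub_sq a).comp x₀.contDiff))
  · have h : HasFDerivAt (fun x : EuclideanSpace ℝ (Fin 2) =>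
        F ‖x‖ + ε / 2 * max (x 0 - a) 0 ^ 2) (0 : EuclideanSpace ℝ (Fin 2) →L[ℝ] ℝ) 0 := by
      simpa [x₀, max_eq_right (neg_nonpos.2 ha.le)] using
        (hasFDerivAt_comp_norm (x := 0) (hF _ (norm_nonneg _)) F'_zero).fun_add
          (((hasDerivAt_max_sub_sq a _).comp_hasFDerivAt 0 x₀.hasFDerivAt).const_mul (ε / 2))
    simp [gradient, h.fderiv]
  · intro x hx
    have hFx : F 0 < F ‖x‖ := strictMonoOn_F self_mem_Ici (norm_nonneg x) (norm_pos_iff.2 hx)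
    rw [F_zero] at hFx
    simpa [ha.le] using add_pos_of_pos_of_nonneg hFx (by positivity)
end

section
/- Let X : [0,∞) → ℝ² be continuous, twice continuously differentiable on (0,∞), with X(0) = X₀ and Ẋ(t) → 0 as t → 0⁺, satisfying Ẍ(t) + (3/t)·Ẋ(t) + ∇f_{ε,a}(X(t)) = 0 for all t > 0, and let J(t) = det(X(t), Ẋ(t)). Then for all t > 0, t³·J(t) = ε·∫₀^t s³·X₂(s)·(X₁(s) − a)₊ ds. -/
open Set Filter Topology

theorem hasDerivAt_of_eqOn_Iic_of_eqOn_Ici {f g h : ℝ → ℝ} {c x d : ℝ}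
    (hg : EqOn f g (Iic c)) (hh : EqOn f h (Ici c))
    (hgd : x ≤ c → HasDerivAt g d x) (hhd : c ≤ x → HasDerivAt h d x) :
    HasDerivAt f d x := by
  rcases lt_trichotomy x c with hx | rfl | hx
  · exact (hgd hx.le).congr_of_eventuallyEq (eventuallyEq_of_mem (Iic_mem_nhds hx) hg)
  · have := ((hgd le_rfl).hasDerivWithinAt.congr hg (hg self_mem_Iic)).union
      ((hhd le_rfl).hasDerivWithinAt.congr hh (hh self_mem_Ici))
    rwa [Iic_union_Ici, hasDerivWithinAt_univ] at this
  · exact (hhd hx.le).congr_of_eventuallyEq (eventuallyEq_of_mem (Ici_mem_nhds hx) hh)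

theorem hasDerivAt_sq_max_zero (u : ℝ) :
    HasDerivAt (fun v : ℝ => (max v 0) ^ 2) (2 * max u 0) u := by
  refine hasDerivAt_of_eqOn_Iic_of_eqOn_Ici (c := 0) (g := fun _ => 0) (h := fun v => v ^ 2)
    (fun v hv => by simp [max_eq_right (mem_Iic.mp hv)])
    (fun v hv => by simp [max_eq_left (mem_Ici.mp hv)]) (fun hu => ?_) (fun hu => ?_)
  · simpa [max_eq_right hu] using hasDerivAt_const u (0 : ℝ)
  · simpa [max_eq_left hu] using hasDerivAt_pow 2 u

-- The junk value `Real.log 0 = 0` makes the integrand `0` at `0`, which is also its limit there.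
theorem continuousAt_one_div_neg_log_zero :
    ContinuousAt (fun u : ℝ => 1 / -Real.log u) 0 := by
  rw [← continuousWithinAt_compl_self, ContinuousWithinAt]
  simpa [one_div, Function.comp_def, Pi.inv_def] using
    (tendsto_neg_atBot_atTop.comp Real.tendsto_log_nhdsNE_zero).inv_tendsto_atTop

theorem continuousOn_one_div_neg_log :
    ContinuousOn (fun u : ℝ => 1 / -Real.log u) (Ioo (-1) 1) := by
  intro u hu
  rcases eq_or_ne u 0 with rfl | hu0
  · exact continuousAt_one_div_neg_log_zero.continuousWithinAt
  have hlog : Real.log u ≠ 0 := Real.log_ne_zero.mpr ⟨hu0, hu.2.ne, hu.1.ne'⟩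
  exact (continuousAt_const.div (Real.continuousAt_log hu0).neg
    (neg_ne_zero.mpr hlog)).continuousWithinAt

theorem hasDerivAt_integral_one_div_neg_log {r : ℝ} (hr : r ∈ Ioo (-1) 1) :
    HasDerivAt (fun r => ∫ u in (0:ℝ)..r, 1 / -Real.log u) (1 / -Real.log r) r := by
  have hsub : uIcc 0 r ⊆ Ioo (-1) 1 :=
    ordConnected_Ioo.uIcc_subset ⟨by norm_num, by norm_num⟩ hr
  exact intervalIntegral.integral_hasDerivAt_right
    ((continuousOn_one_div_neg_log.mono hsub).intervalIntegrable)
    (continuousOn_one_div_neg_log.stronglyMeasurableAtFilter isOpen_Ioo _ hr)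
    (continuousOn_one_div_neg_log.continuousAt (Ioo_mem_nhds hr.1 hr.2))

theorem differentiableAt_F {r : ℝ} (hr : -1 < r) : DifferentiableAt ℝ F r := by
  have hc : Real.exp (-2) < 1 := Real.exp_lt_one_iff.mpr (by norm_num)
  refine (hasDerivAt_of_eqOn_Iic_of_eqOn_Ici (c := Real.exp (-2))
    (h := fun s => (∫ u in (0:ℝ)..Real.exp (-2), 1 / -Real.log u) + 1 / 2 * (s - Real.exp (-2)))
    (d := if r ≤ Real.exp (-2) then 1 / -Real.log r else 1 / 2)
    (fun s hs => if_pos (mem_Iic.mp hs)) (fun s hs => ?_) (fun h => ?_)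
    (fun h => ?_)).differentiableAt
  · rcases (mem_Ici.mp hs).eq_or_lt with rfl | hs
    · simp
    · exact if_neg hs.not_ge
  · rw [if_pos h]
    exact hasDerivAt_integral_one_div_neg_log ⟨hr, h.trans_lt hc⟩
  · -- The two pieces of `F` have the same slope at `e⁻²`, since `1 / -log e⁻² = 1 / 2`.
    have hd : (if r ≤ Real.exp (-2) then 1 / -Real.log r else 1 / 2) = (1 / 2 : ℝ) := by
      split_ifs with h' <;> [rw [le_antisymm h' h, Real.log_exp]; skip] <;> norm_num
    rw [hd]
    simpa using ((hasDerivAt_id r).sub_const (Real.exp (-2))).const_mul (1 / 2 : ℝ)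
      |>.const_add (∫ u in (0:ℝ)..Real.exp (-2), 1 / -Real.log u)

section Gradient

variable {E : Type*} [NormedAddCommGroup E] [InnerProductSpace ℝ E] [CompleteSpace E]
  {f g : E → ℝ} {f' g' x : E}

theorem HasGradientAt.add (hf : HasGradientAt f f' x) (hg : HasGradientAt g g' x) :
    HasGradientAt (fun y => f y + g y) (f' + g') x := by
  rw [hasGradientAt_iff_hasFDerivAt, map_add] at *
  exact hf.add hg

theorem hasGradientAt_comp_norm {φ : ℝ → ℝ} (hx : x ≠ 0) (hφ : DifferentiableAt ℝ φ ‖x‖) :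
    HasGradientAt (fun y => φ ‖y‖) ((deriv φ ‖x‖ / ‖x‖) • x) x := by
  have hnorm : HasFDerivAt (fun y : E => ‖y‖) _ x :=
    ((hasStrictFDerivAt_norm_sq x).hasFDerivAt.sqrt (by positivity)).congr_of_eventuallyEq
      (Eventually.of_forall fun y => (Real.sqrt_sq (norm_nonneg y)).symm)
  rw [hasGradientAt_iff_hasFDerivAt]
  refine (hφ.hasDerivAt.comp_hasFDerivAt x hnorm).congr_fderiv (ContinuousLinearMap.ext fun v => ?_)
  simp [InnerProductSpace.toDual_apply_apply, Real.sqrt_sq (norm_nonneg x)]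
  field_simp

end Gradient

theorem EuclideanSpace.hasGradientAt_comp_apply {ι : Type*} [Fintype ι] [DecidableEq ι]
    {φ : ℝ → ℝ} {d : ℝ} {x : EuclideanSpace ℝ ι} (i : ι) (hφ : HasDerivAt φ d (x i)) :
    HasGradientAt (fun y : EuclideanSpace ℝ ι => φ (y i)) (EuclideanSpace.single i d) x := by
  rw [hasGradientAt_iff_hasFDerivAt]
  refine (hφ.comp_hasFDerivAt x (EuclideanSpace.proj (𝕜 := ℝ) i).hasFDerivAt).congr_fderiv
    (ContinuousLinearMap.ext fun v => ?_)
  simp [InnerProductSpace.toDual_apply_apply, EuclideanSpace.inner_single_left]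

theorem HasDerivAt.euclideanSpace_apply {ι : Type*} [Fintype ι] {X : ℝ → EuclideanSpace ℝ ι}
    {X' : EuclideanSpace ℝ ι} {t : ℝ} (hX : HasDerivAt X X' t) (i : ι) :
    HasDerivAt (fun s => X s i) (X' i) t :=
  (EuclideanSpace.proj (𝕜 := ℝ) i).hasFDerivAt.comp_hasDerivAt t hX

-- The paper's coordinates `x₁, x₂` are `x 0, x 1`.
def det2 (x y : EuclideanSpace ℝ (Fin 2)) : ℝ := x 0 * y 1 - x 1 * y 0

theorem continuous_det2 : Continuous fun p : EuclideanSpace ℝ (Fin 2) × EuclideanSpace ℝ (Fin 2) =>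
    det2 p.1 p.2 := by
  unfold det2
  fun_prop

theorem HasDerivAt.det2 {X Y : ℝ → EuclideanSpace ℝ (Fin 2)} {X' Y' : EuclideanSpace ℝ (Fin 2)}
    {t : ℝ} (hX : HasDerivAt X X' t) (hY : HasDerivAt Y Y' t) :
    HasDerivAt (fun s => det2 (X s) (Y s)) (det2 X' (Y t) + det2 (X t) Y') t := by
  refine (((hX.euclideanSpace_apply 0).mul (hY.euclideanSpace_apply 1)).sub
    ((hX.euclideanSpace_apply 1).mul (hY.euclideanSpace_apply 0))).congr_deriv ?_
  simp only [_root_.det2]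
  ring

theorem hasDerivAt_pow_mul_det2 {X X' X'' : ℝ → EuclideanSpace ℝ (Fin 2)}
    {v : EuclideanSpace ℝ (Fin 2)} {t : ℝ} (n : ℕ) (ht : t ≠ 0)
    (hX : HasDerivAt X (X' t) t) (hX' : HasDerivAt X' (X'' t) t)
    (hODE : X'' t + (n / t) • X' t + v = 0) :
    HasDerivAt (fun s => s ^ n * det2 (X s) (X' s)) (-(t ^ n * det2 (X t) v)) t := by
  have hX'' : X'' t = -((n / t) • X' t + v) := by
    rw [add_assoc] at hODE
    exact eq_neg_of_add_eq_zero_left hODE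
  refine ((hasDerivAt_pow n t).mul (hX.det2 hX')).congr_deriv ?_
  rw [hX'']
  simp only [det2, PiLp.neg_apply, PiLp.add_apply, PiLp.smul_apply, smul_eq_mul]
  rcases n with _ | m
  · simp only [CharP.cast_eq_zero, zero_div, zero_add, zero_mul, pow_zero, one_mul]
    ring
  · simp only [Nat.add_sub_cancel]
    field_simp
    ring

theorem feps_eq (ε a : ℝ) (x : EuclideanSpace ℝ (Fin 2)) :
    feps ε a x = F ‖x‖ + ε / 2 * (max (x 0 - a) 0) ^ 2 := by
  simp [feps, EuclideanSpace.norm_eq, Fin.sum_univ_two]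

theorem hasGradientAt_feps (ε a : ℝ) {x : EuclideanSpace ℝ (Fin 2)} (hx : x ≠ 0) :
    HasGradientAt (feps ε a)
      ((deriv F ‖x‖ / ‖x‖) • x + EuclideanSpace.single 0 (ε * max (x 0 - a) 0)) x := by
  have hsq : HasDerivAt (fun u => ε / 2 * (max (u - a) 0) ^ 2) (ε * max (x 0 - a) 0) (x 0) := by
    refine (((hasDerivAt_sq_max_zero _).comp_sub_const (x 0) a).const_mul (ε / 2)).congr_deriv ?_
    ring
  rw [funext (feps_eq ε a)]
  exact (hasGradientAt_comp_norm hx (differentiableAt_F (by linarith [norm_nonneg x]))).add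
    (EuclideanSpace.hasGradientAt_comp_apply 0 hsq)

theorem det2_gradient_feps (ε a : ℝ) (x : EuclideanSpace ℝ (Fin 2)) :
    det2 x (gradient (feps ε a) x) = -(ε * x 1 * max (x 0 - a) 0) := by
  rcases eq_or_ne x 0 with rfl | hx
  · simp [det2]
  rw [(hasGradientAt_feps ε a hx).gradient]
  simp only [det2, PiLp.add_apply, PiLp.smul_apply, smul_eq_mul, PiLp.single_eq_same, ne_eq,
    one_ne_zero, not_false_eq_true, PiLp.single_eq_of_ne, add_zero]
  ring

theorem angular_momentum_integral_identity_general (a ε : ℝ)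
    (X X' X'' : ℝ → EuclideanSpace ℝ (Fin 2))
    (hXcont : ContinuousOn X (Set.Ici 0))
    (hX' : ∀ t > (0:ℝ), HasDerivAt X (X' t) t)
    (hX'' : ∀ t > (0:ℝ), HasDerivAt X' (X'' t) t)
    (hX'0 : Filter.Tendsto X' (nhdsWithin 0 (Set.Ioi 0)) (nhds 0))
    (hODE : ∀ t > (0:ℝ), X'' t + (3 / t) • X' t + gradient (feps ε a) (X t) = 0)
    (J : ℝ → ℝ) (hJ : ∀ t, J t = X t 0 * X' t 1 - X t 1 * X' t 0) :
    ∀ t > (0:ℝ),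
      t ^ 3 * J t = ε * ∫ s in (0:ℝ)..t, s ^ 3 * X s 1 * max (X s 0 - a) 0 := by
  intro t ht
  obtain rfl : J = fun s => det2 (X s) (X' s) := funext hJ
  have hderiv : ∀ s > (0:ℝ), HasDerivAt (fun s => s ^ 3 * det2 (X s) (X' s))
      (ε * (s ^ 3 * X s 1 * max (X s 0 - a) 0)) s := fun s hs => by
    have h := hasDerivAt_pow_mul_det2 3 hs.ne' (hX' s hs) (hX'' s hs) (by exact_mod_cast hODE s hs)
    rw [det2_gradient_feps] at h
    exact h.congr_deriv (by ring)
  have hlim : Tendsto (fun s => s ^ 3 * det2 (X s) (X' s)) (𝓝[>] 0) (𝓝 0) := by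
    have hX0 : Tendsto X (𝓝[>] 0) (𝓝 (X 0)) :=
      (hXcont.continuousWithinAt self_mem_Ici).mono Ioi_subset_Ici_self
    simpa [det2] using ((continuous_pow 3).tendsto 0).mono_left nhdsWithin_le_nhds |>.mul
      ((continuous_det2.tendsto _).comp (hX0.prodMk_nhds hX'0))
  have hint : IntervalIntegrable (fun s => s ^ 3 * X s 1 * max (X s 0 - a) 0)
      MeasureTheory.volume 0 t := by
    have hcont : ContinuousOn (fun s => s ^ 3 * X s 1 * max (X s 0 - a) 0) (Ici 0) := by fun_prop
    exact (hcont.mono (by rw [uIcc_of_le ht.le]; exact Icc_subset_Ici_self)).intervalIntegrable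
  rw [← intervalIntegral.integral_const_mul,
    intervalIntegral.integral_eq_sub_of_hasDerivAt_of_tendsto ht (fun s hs => hderiv s hs.1)
      (hint.const_mul ε) hlim
      ((hderiv t ht).continuousAt.tendsto.mono_left nhdsWithin_le_nhds), sub_zero]

/-- along a solution `X` of the Nesterov flow for `f_{ε,a}`, with
`J(t) = det(X(t), Ẋ(t))`, one has `t³·J(t) = ε·∫₀^t s³·X₂(s)·(X₁(s) − a)₊ ds`
for all `t > 0`. -/
theorem angular_momentum_integral_identity (a ε : ℝ) (ha : 0 < a) (hε : 0 < ε)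
    (X₀ : EuclideanSpace ℝ (Fin 2)) (X X' X'' : ℝ → EuclideanSpace ℝ (Fin 2))
    (hXcont : ContinuousOn X (Set.Ici 0))
    (hX' : ∀ t > (0:ℝ), HasDerivAt X (X' t) t)
    (hX'' : ∀ t > (0:ℝ), HasDerivAt X' (X'' t) t)
    (hX''cont : ContinuousOn X'' (Set.Ioi 0))
    (hX0 : X 0 = X₀)
    (hX'0 : Filter.Tendsto X' (nhdsWithin 0 (Set.Ioi 0)) (nhds 0))
    (hODE : ∀ t > (0:ℝ), X'' t + (3 / t) • X' t + gradient (feps ε a) (X t) = 0)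
    (J : ℝ → ℝ) (hJ : ∀ t, J t = X t 0 * X' t 1 - X t 1 * X' t 0) :
    ∀ t > (0:ℝ),
      t ^ 3 * J t = ε * ∫ s in (0:ℝ)..t, s ^ 3 * X s 1 * max (X s 0 - a) 0 :=
  angular_momentum_integral_identity_general a ε X X' X'' hXcont hX' hX'' hX'0 hODE J hJ
end

section
/- For all r with 0 < r ≤ e⁻², one has F(r) ≥ (1/(2e))·r/(−log r). -/
open MeasureTheory intervalIntegral

lemma Fint (r : ℝ) (hr : 0 < r) (hr' : r ≤ Real.exp (-2)) :
    IntervalIntegrable (fun u => 1 / (-Real.log u)) volume 0 r := by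
  rw [intervalIntegrable_iff_integrableOn_Ioc_of_le hr.le]
  simp only [one_div]
  apply Measure.integrableOn_of_bounded (M := 1/2) measure_Ioc_lt_top.ne
  · exact Real.measurable_log.neg.inv.aestronglyMeasurable
  · filter_upwards [ae_restrict_mem measurableSet_Ioc] with u hu
    have h1 : Real.log u ≤ -2 := by
      calc Real.log u ≤ Real.log r := Real.log_le_log hu.1 hu.2
        _ ≤ Real.log (Real.exp (-2)) := Real.log_le_log hr hr'
        _ = -2 := Real.log_exp _
    have h2 : (2:ℝ) ≤ -Real.log u := by linarith
    rw [Real.norm_eq_abs, abs_of_nonneg (by positivity)]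
    rw [inv_le_comm₀ (by linarith) (by norm_num)]
    norm_num; linarith

/-- for `0 < r ≤ e⁻²`, `F(r) ≥ (1/(2e))·r/(−log r)`. -/
theorem F_lower_bound (r : ℝ) (hr : 0 < r) (hr' : r ≤ Real.exp (-2)) :
    F r ≥ (1 / (2 * Real.exp 1)) * (r / (-Real.log r)) := by
  have hlogr : Real.log r ≤ -2 := by
    calc Real.log r ≤ Real.log (Real.exp (-2)) := Real.log_le_log hr hr'
      _ = -2 := Real.log_exp _
  set L : ℝ := -Real.log r with hLdef
  have hL : (2:ℝ) ≤ L := by simp [hLdef]; linarith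
  have hl2 : Real.log 2 < 0.6931471808 := Real.log_two_lt_d9
  have hl2' : (0:ℝ) < Real.log 2 := Real.log_pos (by norm_num)
  have hE : 2.7182818283 < Real.exp 1 := Real.exp_one_gt_d9
  -- -log(r/2) = L + log 2
  have hlogr2 : -Real.log (r/2) = L + Real.log 2 := by
    rw [Real.log_div hr.ne' (by norm_num)]; ring
  rw [F, if_pos hr', ge_iff_le]
  have hint := Fint r hr hr'
  have hsub : Set.uIcc (r/2) r ⊆ Set.uIcc 0 r := by
    apply Set.uIcc_subset_uIcc <;> rw [Set.mem_uIcc] <;> [left; left]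
    · constructor <;> linarith
    · constructor <;> linarith
  have hint2 : IntervalIntegrable (fun u => 1 / (-Real.log u)) volume (r/2) r :=
    hint.mono_set hsub
  -- split
  have hsplit : (∫ u in (0:ℝ)..(r/2), 1 / (-Real.log u)) + (∫ u in (r/2:ℝ)..r, 1 / (-Real.log u))
      = ∫ u in (0:ℝ)..r, 1 / (-Real.log u) :=
    integral_add_adjacent_intervals (hint.mono_set (by
      apply Set.uIcc_subset_uIcc <;> rw [Set.mem_uIcc] <;> [left; left]
      · constructor <;> linarith
      · constructor <;> linarith)) hint2
  have h1 : (0:ℝ) ≤ ∫ u in (0:ℝ)..(r/2), 1 / (-Real.log u) := by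
    apply intervalIntegral.integral_nonneg (by linarith)
    intro u hu
    rcases eq_or_lt_of_le hu.1 with h | h
    · simp [← h]
    · have : Real.log u ≤ -2 := by
        calc Real.log u ≤ Real.log r := Real.log_le_log h (by linarith [hu.2])
          _ ≤ -2 := hlogr
      exact le_of_lt (div_pos one_pos (by linarith))
  have h2 : (r - r/2) * (1 / (L + Real.log 2)) ≤ ∫ u in (r/2:ℝ)..r, 1 / (-Real.log u) := by
    have := intervalIntegral.integral_mono_on (f := fun _ => 1 / (L + Real.log 2))
      (g := fun u => 1 / (-Real.log u)) (by linarith : r/2 ≤ r)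
      (intervalIntegrable_const) hint2 ?_
    · simpa using this
    · intro u hu
      have hu0 : 0 < u := by linarith [hu.1]
      have hlu : Real.log (r/2) ≤ Real.log u := Real.log_le_log (by positivity) hu.1
      have h3 : -Real.log u ≤ L + Real.log 2 := by rw [← hlogr2]; linarith
      have h4 : Real.log u ≤ -2 := le_trans (Real.log_le_log hu0 hu.2) hlogr
      show 1 / (L + Real.log 2) ≤ 1 / (-Real.log u)
      exact one_div_le_one_div_of_le (by linarith) h3
  have key : 1 / (2 * Real.exp 1) * (r / L) ≤ (r - r/2) * (1 / (L + Real.log 2)) := by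
    have e1 : 1 / (2 * Real.exp 1) * (r / L) = r / (2 * Real.exp 1 * L) := by
      field_simp
    have e2 : (r - r/2) * (1 / (L + Real.log 2)) = r / (2 * (L + Real.log 2)) := by
      rw [eq_div_iff (by positivity)]; field_simp; ring
    rw [e1, e2]
    apply div_le_div_of_nonneg_left hr.le (by positivity)
    nlinarith
  linarith
end

section
/- Let M > 0. There exists a constant C > 0 (depending only on M) such that: for all r and t with 0 < r ≤ e⁻², t ≥ e, and F(r) ≤ M/t², one has r ≤ C·(log t)/t². Consequently, if r : [0,∞) → (0,∞) satisfies r(t) → 0 as t → ∞ and F(r(t)) ≤ M/t² for all sufficiently large t, then there exist constants C_r > 0 and T_r > 0 with r(t) ≤ C_r·(log t)/t² for all t ≥ T_r. -/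
open Real Set Filter

/-
For `0 < r ≤ e⁻²` the integrand `1/(-log u)` is nonnegative and increasing, so
`F r ≥ ∫_{r/2}^r du/(-log u) ≥ (r/2)/(-log (r/2))`, i.e. `r ≤ 2 (-log (r/2)) M/t²`.
Either `r ≤ 1/t²`, which is already of the required size since `log t ≥ 1`, or
`-log (r/2) < log 2 + 2 log t ≤ 3 log t`, giving `r ≤ 6 M log t / t²`.
-/

theorem MonotoneOn.sub_mul_le_intervalIntegral {f : ℝ → ℝ} {a b : ℝ} (hab : a ≤ b)
    (hf : MonotoneOn f (Icc a b)) : (b - a) * f a ≤ ∫ x in a..b, f x := by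
  have hint : IntervalIntegrable f MeasureTheory.volume a b :=
    MonotoneOn.intervalIntegrable (by rwa [uIcc_of_le hab])
  calc (b - a) * f a = ∫ _ in a..b, f a := by simp
    _ ≤ ∫ x in a..b, f x := intervalIntegral.integral_mono_on hab intervalIntegrable_const hint
        fun x hx ↦ hf (left_mem_Icc.2 hab) hx hx.1

-- The endpoint `u = 0` is included because `log 0 = 0` and `1 / 0 = 0` make the integrand `0` there.
theorem monotoneOn_one_div_neg_log : MonotoneOn (fun u ↦ 1 / -log u) (Ico 0 1) := by
  intro a ⟨ha0, _⟩ b ⟨_, hb1⟩ hab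
  rcases ha0.eq_or_lt with rfl | ha
  · simpa using log_nonpos (by linarith) hb1.le
  · have hlogb : 0 < -log b := neg_pos.2 (log_neg (ha.trans_le hab) hb1)
    exact one_div_le_one_div_of_le hlogb (neg_le_neg (log_le_log ha hab))

theorem half_div_neg_log_half_le_F {r : ℝ} (hr : 0 < r) (hre : r ≤ exp (-2)) :
    r / 2 / -log (r / 2) ≤ F r := by
  have hmono : MonotoneOn (fun u ↦ 1 / -log u) (Icc 0 r) :=
    monotoneOn_one_div_neg_log.mono fun u hu ↦
      ⟨hu.1, hu.2.trans_lt (hre.trans_lt (exp_lt_one_iff.2 (by norm_num)))⟩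
  have hint : ∀ a b, 0 ≤ a → a ≤ b → b ≤ r →
      IntervalIntegrable (fun u ↦ 1 / -log u) MeasureTheory.volume a b := fun a b ha hab hb ↦
    MonotoneOn.intervalIntegrable (hmono.mono (by rw [uIcc_of_le hab]; exact Icc_subset_Icc ha hb))
  have hfirst : 0 ≤ ∫ u in (0 : ℝ)..r / 2, 1 / -log u :=
    calc (0 : ℝ) = (r / 2 - 0) * (1 / -log 0) := by simp
      _ ≤ _ := MonotoneOn.sub_mul_le_intervalIntegral (by linarith)
          (hmono.mono (Icc_subset_Icc le_rfl (by linarith)))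
  have hsecond : r / 2 / -log (r / 2) ≤ ∫ u in r / 2..r, 1 / -log u :=
    calc r / 2 / -log (r / 2) = (r - r / 2) * (1 / -log (r / 2)) := by ring
      _ ≤ _ := MonotoneOn.sub_mul_le_intervalIntegral (by linarith)
          (hmono.mono (Icc_subset_Icc (by linarith) le_rfl))
  rw [F, if_pos hre, ← intervalIntegral.integral_add_adjacent_intervals
    (hint 0 (r / 2) le_rfl (by linarith) (by linarith)) (hint (r / 2) r (by linarith)
      (by linarith) le_rfl)]
  linarith

theorem neg_log_half_le_three_mul_log {r t : ℝ} (ht : exp 1 ≤ t) (hrt : 1 / t ^ 2 < r) :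
    -log (r / 2) ≤ 3 * log t := by
  have ht0 : 0 < t := (exp_pos 1).trans_le ht
  have hlogt : 1 ≤ log t := (le_log_iff_exp_le ht0).2 ht
  have hlogr : -(2 * log t) < log r := by
    simpa [log_pow] using log_lt_log (by positivity) hrt
  rw [log_div ((one_div_pos.2 (by positivity)).trans hrt).ne' two_ne_zero]
  linarith [log_two_lt_d9]

theorem le_mul_log_div_sq_of_F_le {M r t : ℝ} (hM : 0 ≤ M) (hr : 0 < r) (hre : r ≤ exp (-2))
    (ht : exp 1 ≤ t) (hF : F r ≤ M / t ^ 2) : r ≤ (1 + 6 * M) * log t / t ^ 2 := by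
  have ht0 : 0 < t := (exp_pos 1).trans_le ht
  have hlogt : 1 ≤ log t := (le_log_iff_exp_le ht0).2 ht
  rcases le_or_gt r (1 / t ^ 2) with hsmall | hlarge
  · exact hsmall.trans (by gcongr; nlinarith)
  · have hL : 0 < -log (r / 2) := neg_pos.2 (log_neg (by linarith) (by
      linarith [exp_lt_one_iff.2 (by norm_num : (-2 : ℝ) < 0)]))
    have hLt := neg_log_half_le_three_mul_log ht hlarge
    have hF' : r / 2 / -log (r / 2) ≤ M / t ^ 2 := (half_div_neg_log_half_le_F hr hre).trans hF
    calc r = 2 * -log (r / 2) * (r / 2 / -log (r / 2)) := by field_simp [(neg_pos.1 hL).ne]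
      _ ≤ 2 * (3 * log t) * (M / t ^ 2) := by gcongr
      _ = 6 * M * log t / t ^ 2 := by ring
      _ ≤ (1 + 6 * M) * log t / t ^ 2 := by gcongr; linarith

/-- if `F(r) ≤ M/t²` with `0 < r ≤ e⁻²` and `t ≥ e`, then
`r ≤ C·(log t)/t²` for a constant `C` depending only on `M`; consequently any positive
`r(t) → 0` with `F(r(t)) ≤ M/t²` eventually satisfies `r(t) ≤ C_r·(log t)/t²`
for all large `t`. -/
theorem radial_decay_bound (M : ℝ) (hM : 0 < M) :
    (∃ C > (0:ℝ), ∀ r t : ℝ, 0 < r → r ≤ Real.exp (-2) → Real.exp 1 ≤ t →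
      F r ≤ M / t ^ 2 → r ≤ C * Real.log t / t ^ 2) ∧
    (∀ r : ℝ → ℝ, (∀ t ≥ (0:ℝ), 0 < r t) →
      Filter.Tendsto r Filter.atTop (nhds 0) →
      (∀ᶠ t in Filter.atTop, F (r t) ≤ M / t ^ 2) →
      ∃ Cr > (0:ℝ), ∃ Tr > (0:ℝ), ∀ t ≥ Tr, r t ≤ Cr * Real.log t / t ^ 2) := by
  have hC : (0 : ℝ) < 1 + 6 * M := by linarith
  refine ⟨⟨1 + 6 * M, hC, fun r t ↦ le_mul_log_div_sq_of_F_le hM.le⟩, ?_⟩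
  intro r hpos hlim hF
  have hsmall : ∀ᶠ t in atTop, r t ≤ exp (-2) := hlim.eventually (eventually_le_nhds (exp_pos _))
  obtain ⟨T, hT⟩ := (hsmall.and (hF.and (eventually_ge_atTop (exp 1)))).exists_forall_of_atTop
  refine ⟨1 + 6 * M, hC, max T (exp 1), (exp_pos 1).trans_le (le_max_right _ _), fun t ht ↦ ?_⟩
  obtain ⟨hre, hFt, hte⟩ := hT t ((le_max_left _ _).trans ht)
  exact le_mul_log_div_sq_of_F_le hM.le (hpos t ((exp_pos 1).le.trans hte)) hre hte hFt
end

section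
/- Let κ > 0, C > 0, T ≥ e, and let X : [T,∞) → ℝ² be continuously differentiable with X(t) ≠ 0 for all t ≥ T. Suppose that t³·det(X(t), Ẋ(t)) = κ for all t ≥ T, and that ‖X(t)‖ ≤ C·(log t)/t² for all t ≥ T. Then ∫_T^∞ ‖Ẋ(t)‖ dt = ∞. (Indeed, the component of Ẋ(t) orthogonal to X(t) has norm κ/(t³·‖X(t)‖) ≥ κ/(C·t·log t).) -/
/-!
The conserved angular momentum bounds the speed from below:
`κ = t³ det(X, Ẋ) ≤ t³ ‖X‖ ‖Ẋ‖ ≤ C t log t ‖Ẋ‖`, so `‖Ẋ(t)‖ ≥ (κ / C) / (t log t)`.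
The right-hand side has the primitive `(κ / C) log log t`, which is unbounded, so it is not
integrable on `[T, ∞)`.
-/

open MeasureTheory Set Filter Real

def planarDet (x y : EuclideanSpace ℝ (Fin 2)) : ℝ := x 0 * y 1 - x 1 * y 0

theorem planarDet_sq_add_inner_sq (x y : EuclideanSpace ℝ (Fin 2)) :
    planarDet x y ^ 2 + inner ℝ x y ^ 2 = ‖x‖ ^ 2 * ‖y‖ ^ 2 := by
  simp only [planarDet, EuclideanSpace.norm_sq_eq, EuclideanSpace.inner_eq_star_dotProduct,
    dotProduct, Fin.sum_univ_two, Real.norm_eq_abs, sq_abs, star_trivial]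
  ring

theorem abs_planarDet_le (x y : EuclideanSpace ℝ (Fin 2)) : |planarDet x y| ≤ ‖x‖ * ‖y‖ :=
  abs_le_of_sq_le_sq (by nlinarith [planarDet_sq_add_inner_sq x y, sq_nonneg (inner ℝ x y)])
    (by positivity)

theorem div_le_norm_of_le_planarDet {x v : EuclideanSpace ℝ (Fin 2)} {d r : ℝ} (hr : 0 < r)
    (hx : ‖x‖ ≤ r) (hd : d ≤ planarDet x v) : d / r ≤ ‖v‖ := by
  rw [div_le_iff₀ hr]
  calc d ≤ |planarDet x v| := hd.trans (le_abs_self _)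
    _ ≤ ‖x‖ * ‖v‖ := abs_planarDet_le x v
    _ ≤ ‖v‖ * r := by rw [mul_comm]; gcongr

theorem not_integrableOn_Ici_inv_div_log (a : ℝ) :
    ¬ IntegrableOn (fun t ↦ t⁻¹ / log t) (Ici a) := by
  have hderiv : ∀ᶠ t in atTop, HasDerivAt (fun t ↦ log (log t)) (t⁻¹ / log t) t := by
    filter_upwards [eventually_gt_atTop 1] with t ht
    exact hasDerivAt_log_log (by positivity) ht.ne' (by linarith)
  exact not_integrableOn_of_tendsto_norm_atTop_of_deriv_isBigO_filter atTop (Ici_mem_atTop a)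
    (hderiv.mono fun _ ht ↦ ht.differentiableAt)
    (tendsto_norm_atTop_atTop.comp (tendsto_log_atTop.comp tendsto_log_atTop))
    (EventuallyEq.isBigO (hderiv.mono fun _ ht ↦ ht.deriv))

theorem lintegral_Ici_inv_div_log_eq_top {a : ℝ} (ha : 1 < a) :
    ∫⁻ t in Ici a, ENNReal.ofReal (t⁻¹ / log t) = ⊤ := by
  have hnonneg : 0 ≤ᵐ[volume.restrict (Ici a)] fun t ↦ t⁻¹ / log t :=
    ae_restrict_of_forall_mem measurableSet_Ici fun t (ht : a ≤ t) ↦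
      div_nonneg (inv_nonneg.2 (by linarith)) (log_nonneg (by linarith))
  by_contra hfin
  exact not_integrableOn_Ici_inv_div_log a
    ⟨(measurable_inv.div measurable_log).aestronglyMeasurable, (hasFiniteIntegral_iff_ofReal hnonneg).2 (lt_top_iff_ne_top.2 hfin)⟩

theorem lintegral_Ici_eq_top_of_const_mul_inv_div_log_le {f : ℝ → ℝ} {a c : ℝ} (ha : 1 < a)
    (hc : 0 < c) (hf : ∀ t ≥ a, c * (t⁻¹ / log t) ≤ f t) :
    ∫⁻ t in Ici a, ENNReal.ofReal (f t) = ⊤ := by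
  refine top_unique ?_
  calc ⊤ = ENNReal.ofReal c * ∫⁻ t in Ici a, ENNReal.ofReal (t⁻¹ / log t) := by
        rw [lintegral_Ici_inv_div_log_eq_top ha, ENNReal.mul_top (ENNReal.ofReal_pos.2 hc).ne']
    _ = ∫⁻ t in Ici a, ENNReal.ofReal (c * (t⁻¹ / log t)) := by
        rw [← lintegral_const_mul _ (by fun_prop)]
        simp only [ENNReal.ofReal_mul hc.le]
    _ ≤ ∫⁻ t in Ici a, ENNReal.ofReal (f t) :=
        setLIntegral_mono' measurableSet_Ici fun t ht ↦ ENNReal.ofReal_le_ofReal (hf t ht)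

theorem infinite_path_length_from_conserved_momentum_general
    (κ C T : ℝ) (hκ : 0 < κ) (hC : 0 < C) (hT : Real.exp 1 ≤ T)
    (X X' : ℝ → EuclideanSpace ℝ (Fin 2))
    (hmom : ∀ t ≥ T, t ^ 3 * (X t 0 * X' t 1 - X t 1 * X' t 0) = κ)
    (hbound : ∀ t ≥ T, ‖X t‖ ≤ C * Real.log t / t ^ 2) :
    (∫⁻ t in Set.Ici T, (‖X' t‖₊ : ENNReal)) = ⊤ := by
  have hT1 : 1 < T := (one_lt_exp_iff.2 one_pos).trans_le hT
  simp only [← enorm_eq_nnnorm, ← ofReal_norm]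
  refine lintegral_Ici_eq_top_of_const_mul_inv_div_log_le hT1 (div_pos hκ hC) fun t ht ↦ ?_
  have ht0 : 0 < t := by linarith
  have hlog : 0 < log t := log_pos (by linarith)
  have hdet : κ / t ^ 3 = planarDet (X t) (X' t) := by
    rw [div_eq_iff (by positivity), mul_comm]; exact (hmom t ht).symm
  calc κ / C * (t⁻¹ / log t) = κ / t ^ 3 / (C * log t / t ^ 2) := by field_simp
    _ ≤ ‖X' t‖ := div_le_norm_of_le_planarDet (by positivity) (hbound t ht) hdet.le

/-- if `X : [T,∞) → ℝ²` is `C¹`, never zero, with conserved angular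
momentum `t³·det(X(t), Ẋ(t)) = κ > 0` and `‖X(t)‖ ≤ C·(log t)/t²`, then
`∫_T^∞ ‖Ẋ(t)‖ dt = ∞`. -/
theorem infinite_path_length_from_conserved_momentum
    (κ C T : ℝ) (hκ : 0 < κ) (hC : 0 < C) (hT : Real.exp 1 ≤ T)
    (X X' : ℝ → EuclideanSpace ℝ (Fin 2))
    (hX' : ∀ t ≥ T, HasDerivAt X (X' t) t)
    (hX'cont : ContinuousOn X' (Set.Ici T))
    (hne : ∀ t ≥ T, X t ≠ 0)
    (hmom : ∀ t ≥ T, t ^ 3 * (X t 0 * X' t 1 - X t 1 * X' t 0) = κ)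
    (hbound : ∀ t ≥ T, ‖X t‖ ≤ C * Real.log t / t ^ 2) :
    (∫⁻ t in Set.Ici T, (‖X' t‖₊ : ENNReal)) = ⊤ :=
  infinite_path_length_from_conserved_momentum_general κ C T hκ hC hT X X' hmom hbound
end

section
/- Let Q ∈ ℝ^{d×d} be symmetric positive semidefinite and let q(x) = (1/2)·xᵀQx. Let X : [0,∞) → ℝ^d be continuous, twice continuously differentiable on (0,∞), with X(0) = X₀ and Ẋ(t) → 0 as t → 0⁺, satisfying Ẍ(t) + (3/t)·Ẋ(t) + Q·X(t) = 0 for all t > 0. Then the trajectory is rectifiable: ∫₀^∞ ‖Ẋ(t)‖ dt < ∞. -/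
/-!
Split off the kernel of `T = Q`. Since `T` is symmetric, the projection `P` onto `ker T` kills the
range of `T`, so `y = P Ẋ` solves `y' = -(3/t) y`; thus `t³ y` is constant, and it vanishes because
`Ẋ(0⁺) = 0`. Hence `Z = X - P X` is again a solution, with the same velocity, lying in `(ker T)ᗮ`,
where `⟪T z, z⟫ ≥ μ ‖z‖²` for some `μ > 0`. Along `Z` the Lyapunov function
`G(t) = t ‖t Ż + (3/2) Z‖² + t³ ⟪T Z, Z⟫ - (3/4) t ‖Z‖²` satisfies `G' = (3/2) ‖Z‖²`, and once
`μ t² ≥ 3` also `G ≥ (3/4) μ t³ ‖Z‖²`, so `G' ≤ 2 G / (μ t³)` and `G` stays bounded. Both terms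
`t ‖t Ż + (3/2) Z‖²` and `t³ ‖Z‖²` are then bounded, which gives `‖Ż(t)‖ = O(t^(-3/2))`.
Near `0` the velocity is integrable because it tends to `0`.
-/

open Set Filter Topology MeasureTheory
open scoped RealInnerProductSpace

theorem eq_zero_of_hasDerivAt_eq_neg_div_smul {F : Type*} [NormedAddCommGroup F]
    [NormedSpace ℝ F] {y : ℝ → F} {k : ℕ} (hy : ∀ t > 0, HasDerivAt y (-((k : ℝ) / t) • y t) t)
    (hy0 : Tendsto y (𝓝[>] 0) (𝓝 0)) {t : ℝ} (ht : 0 < t) : y t = 0 := by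
  have hderiv : ∀ s > 0, HasDerivAt (fun s => s ^ k • y s) 0 s := by
    intro s hs
    refine ((hasDerivAt_pow k s).smul (hy s hs)).congr_deriv ?_
    rw [smul_smul, ← add_smul, smul_eq_zero]
    left
    rcases k with _ | k
    · simp
    · rw [Nat.add_sub_cancel, pow_succ]
      field_simp
      push_cast
      ring
  obtain ⟨c, hc⟩ := isOpen_Ioi.exists_is_const_of_deriv_eq_zero isPreconnected_Ioi
    (fun s hs => (hderiv s hs).differentiableAt.differentiableWithinAt)
    (fun s hs => (hderiv s hs).deriv)
  have hlim : Tendsto (fun s : ℝ => s ^ k • y s) (𝓝[>] 0) (𝓝 0) := by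
    simpa using ((continuous_pow k).tendsto' 0 _ rfl).mono_left nhdsWithin_le_nhds |>.smul hy0
  have hc0 : c = 0 :=
    tendsto_nhds_unique (tendsto_const_nhds.congr' (eventually_nhdsWithin_of_forall
      fun s hs => (hc s hs).symm)) hlim
  have hyt := hc t ht
  rw [hc0, smul_eq_zero] at hyt
  exact hyt.resolve_left (pow_ne_zero _ ht.ne')

theorem mul_exp_le_of_hasDerivAt_le {g g' : ℝ → ℝ} {a c : ℝ} (ha : 0 < a)
    (hg : ∀ t ≥ a, HasDerivAt g (g' t) t) (hg' : ∀ t ≥ a, g' t ≤ 2 * c / t ^ 3 * g t)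
    {t : ℝ} (ht : a ≤ t) : g t * Real.exp (c / t ^ 2) ≤ g a * Real.exp (c / a ^ 2) := by
  have hderiv : ∀ s ≥ a, HasDerivAt (fun s => g s * Real.exp (c / s ^ 2))
      (Real.exp (c / s ^ 2) * (g' s - 2 * c / s ^ 3 * g s)) s := by
    intro s hs
    have hs0 : s ≠ 0 := (ha.trans_le hs).ne'
    refine ((hg s hs).mul ((hasDerivAt_const s c).div (hasDerivAt_pow 2 s)
      (pow_ne_zero 2 hs0)).exp).congr_deriv ?_
    simp only [Pi.div_apply]
    field_simp
    ring
  refine antitoneOn_of_hasDerivWithinAt_nonpos (convex_Ici a)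
    (fun s hs => (hderiv s hs).continuousAt.continuousWithinAt)
    (fun s hs => (hderiv s (interior_subset hs)).hasDerivWithinAt)
    (fun s hs => mul_nonpos_of_nonneg_of_nonpos (Real.exp_pos _).le
      (sub_nonpos.2 (hg' s (interior_subset hs)))) self_mem_Ici ht ht

theorem integrableOn_Ioc_of_continuousOn_of_tendsto {F : Type*} [NormedAddCommGroup F]
    {f : ℝ → F} {a b : ℝ} {l : F} (hf : ContinuousOn f (Ioc a b))
    (hfa : Tendsto f (𝓝[>] a) (𝓝 l)) : IntegrableOn f (Ioc a b) := by
  have hcont : ContinuousOn (Function.update f a l) (Icc a b) := by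
    rw [continuousOn_update_iff, Icc_sdiff_left]
    exact ⟨hf, fun _ => hfa.mono_left (nhdsWithin_mono _ Ioc_subset_Ioi_self)⟩
  refine (hcont.integrableOn_Icc.mono_set Ioc_subset_Icc_self).congr_fun
    (fun s hs => Function.update_of_ne hs.1.ne' _ _) measurableSet_Ioc

variable {E : Type*} [NormedAddCommGroup E] [InnerProductSpace ℝ E]

theorem LinearMap.IsSymmetric.apply_mem_orthogonal_ker {T : E →ₗ[ℝ] E} (hT : T.IsSymmetric)
    (x : E) : T x ∈ T.kerᗮ :=
  hT.orthogonal_range ▸ Submodule.le_orthogonal_orthogonal _ (LinearMap.mem_range_self T x)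

theorem ContinuousLinearMap.IsPositive.apply_eq_zero_of_inner_eq_zero {T : E →L[ℝ] E}
    (hT : T.IsPositive) {x : E} (hx : ⟪T x, x⟫ = 0) : T x = 0 := by
  have key : ∀ s : ℝ, 0 ≤ s ^ 2 * ⟪T (T x), T x⟫ - 2 * s * ‖T x‖ ^ 2 := by
    intro s
    have h := hT.inner_nonneg_left (x - s • T x)
    simp only [map_sub, map_smul, inner_sub_left, inner_sub_right, real_inner_smul_left,
      real_inner_smul_right, hx, real_inner_self_eq_norm_sq] at h
    rw [hT.inner_left_eq_inner_right (T x) x, real_inner_self_eq_norm_sq] at h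
    linarith
  have hc := hT.inner_nonneg_left (T x)
  by_contra hne
  have hm : 0 < ‖T x‖ ^ 2 := by positivity
  have h := key (‖T x‖ ^ 2 / (⟪T (T x), T x⟫ + 1))
  field_simp at h
  nlinarith [pow_pos hm 2]

theorem ContinuousLinearMap.IsPositive.exists_pos_mul_norm_sq_le [FiniteDimensional ℝ E]
    {T : E →L[ℝ] E} (hT : T.IsPositive) :
    ∃ μ > 0, ∀ x ∈ T.kerᗮ, μ * ‖x‖ ^ 2 ≤ ⟪T x, x⟫ := by
  set K := T.ker
  have hcompact : IsCompact ((Kᗮ : Set E) ∩ Metric.sphere 0 1) :=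
    (isCompact_sphere 0 1).inter_left Kᗮ.closed_of_finiteDimensional
  have hpos : ∀ z ∈ (Kᗮ : Set E) ∩ Metric.sphere 0 1, 0 < ⟪T z, z⟫ := by
    rintro z ⟨hzK, hz1⟩
    refine (hT.inner_nonneg_left z).lt_of_ne fun h => ?_
    have hzK' : z ∈ K := hT.apply_eq_zero_of_inner_eq_zero h.symm
    have : z = 0 := by simpa using Submodule.inner_right_of_mem_orthogonal hzK' hzK
    simp [this] at hz1
  obtain ⟨μ, hμ, hμle⟩ := hcompact.exists_forall_le'
    (T.continuous.inner continuous_id).continuousOn hpos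
  refine ⟨μ, hμ, fun x hx => ?_⟩
  rcases eq_or_ne x 0 with rfl | hx0
  · simp
  have hnorm : 0 < ‖x‖ := norm_pos_iff.2 hx0
  have h := hμle (‖x‖⁻¹ • x) ⟨Kᗮ.smul_mem _ hx, by simp [norm_smul, hnorm.ne']⟩
  simp only [id, map_smul, real_inner_smul_left, real_inner_smul_right] at h
  calc μ * ‖x‖ ^ 2 ≤ ‖x‖⁻¹ * (‖x‖⁻¹ * ⟪T x, x⟫) * ‖x‖ ^ 2 := by gcongr
    _ = ⟪T x, x⟫ := by field_simp

structure IsNesterovFlow (T : E →L[ℝ] E) (X V : ℝ → E) : Prop where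
  hasDerivAt_trajectory : ∀ t > 0, HasDerivAt X (V t) t
  hasDerivAt_velocity : ∀ t > 0, HasDerivAt V (-((3 / t) • V t + T (X t))) t

noncomputable def nesterovLyapunov (T : E →L[ℝ] E) (t : ℝ) (x v : E) : ℝ :=
  t ^ 3 * (‖v‖ ^ 2 + ⟪T x, x⟫) + 3 * t ^ 2 * ⟪v, x⟫ + 3 / 2 * t * ‖x‖ ^ 2

theorem nesterovLyapunov_eq (T : E →L[ℝ] E) (t : ℝ) (x v : E) :
    nesterovLyapunov T t x v =
      t * ‖t • v + (3 / 2 : ℝ) • x‖ ^ 2 + t ^ 3 * ⟪T x, x⟫ - 3 / 4 * t * ‖x‖ ^ 2 := by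
  simp only [nesterovLyapunov, norm_add_sq_real, norm_smul, real_inner_smul_left,
    real_inner_smul_right, Real.norm_eq_abs, mul_pow, sq_abs]
  ring

theorem add_le_nesterovLyapunov {T : E →L[ℝ] E} {μ t : ℝ} {x : E} (v : E) (ht : 0 ≤ t)
    (hμt : 3 ≤ μ * t ^ 2) (hx : μ * ‖x‖ ^ 2 ≤ ⟪T x, x⟫) :
    t * ‖t • v + (3 / 2 : ℝ) • x‖ ^ 2 + 3 / 4 * μ * t ^ 3 * ‖x‖ ^ 2 ≤
      nesterovLyapunov T t x v := by
  rw [nesterovLyapunov_eq]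
  have h1 : t ^ 3 * (μ * ‖x‖ ^ 2) ≤ t ^ 3 * ⟪T x, x⟫ := by gcongr
  have h2 : 3 * (t * ‖x‖ ^ 2) ≤ μ * t ^ 2 * (t * ‖x‖ ^ 2) := by gcongr
  nlinarith

theorem sq_mul_norm_sq_le_of_nesterovLyapunov_le {T : E →L[ℝ] E} {μ t C : ℝ} {x v : E}
    (ht : 1 ≤ t) (hμt : 3 ≤ μ * t ^ 2) (hx : μ * ‖x‖ ^ 2 ≤ ⟪T x, x⟫)
    (hC : nesterovLyapunov T t x v ≤ C) : t ^ 3 * ‖v‖ ^ 2 ≤ 2 * (1 + 3 / μ) * C := by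
  have hμ : 0 < μ := by nlinarith [sq_nonneg t]
  have ht0 : 0 ≤ t := by linarith
  have hle := (add_le_nesterovLyapunov v ht0 hμt hx).trans hC
  set w := t • v + (3 / 2 : ℝ) • x
  have hxC : 3 / 4 * μ * t ^ 3 * ‖x‖ ^ 2 ≤ C := by
    have : 0 ≤ t * ‖w‖ ^ 2 := by positivity
    linarith
  have hwC : t * ‖w‖ ^ 2 ≤ C := by
    have : 0 ≤ 3 / 4 * μ * t ^ 3 * ‖x‖ ^ 2 := by positivity
    linarith
  have hv : t * ‖v‖ ≤ ‖w‖ + 3 / 2 * ‖x‖ := by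
    have : t • v = w - (3 / 2 : ℝ) • x := by simp [w]
    calc t * ‖v‖ = ‖w - (3 / 2 : ℝ) • x‖ := by rw [← this, norm_smul, Real.norm_of_nonneg ht0]
      _ ≤ ‖w‖ + 3 / 2 * ‖x‖ := (norm_sub_le _ _).trans_eq (by
        rw [norm_smul, Real.norm_of_nonneg (by norm_num : (0 : ℝ) ≤ 3 / 2)])
  have hsq : t ^ 2 * ‖v‖ ^ 2 ≤ 2 * ‖w‖ ^ 2 + 9 / 2 * ‖x‖ ^ 2 := by
    nlinarith [mul_nonneg ht0 (norm_nonneg v), sq_nonneg (‖w‖ - 3 / 2 * ‖x‖)]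
  calc t ^ 3 * ‖v‖ ^ 2 = t * (t ^ 2 * ‖v‖ ^ 2) := by ring
    _ ≤ t * (2 * ‖w‖ ^ 2 + 9 / 2 * ‖x‖ ^ 2) := by gcongr
    _ ≤ 2 * (t * ‖w‖ ^ 2) + 9 / 2 * (t ^ 3 * ‖x‖ ^ 2) := by
      have : t ≤ t ^ 3 := by nlinarith
      nlinarith [sq_nonneg ‖x‖]
    _ = 2 * (t * ‖w‖ ^ 2) + 6 / μ * (3 / 4 * μ * t ^ 3 * ‖x‖ ^ 2) := by field_simp; ring
    _ ≤ 2 * C + 6 / μ * C := by gcongr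
    _ = 2 * (1 + 3 / μ) * C := by ring

namespace IsNesterovFlow

variable {T : E →L[ℝ] E} {X V : ℝ → E}

theorem continuousOn_velocity (h : IsNesterovFlow T X V) : ContinuousOn V (Ioi 0) :=
  fun t ht => (h.hasDerivAt_velocity t ht).continuousAt.continuousWithinAt

theorem starProjection_ker_velocity [CompleteSpace E] (h : IsNesterovFlow T X V)
    (hT : (T : E →ₗ[ℝ] E).IsSymmetric) (hV0 : Tendsto V (𝓝[>] 0) (𝓝 0)) {t : ℝ} (ht : 0 < t) :
    T.ker.starProjection (V t) = 0 := by
  refine eq_zero_of_hasDerivAt_eq_neg_div_smul (y := fun s => T.ker.starProjection (V s)) (k := 3)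
    (fun s hs => ?_) ?_ ht
  · have hTX : T.ker.starProjection (T (X s)) = 0 :=
      (Submodule.starProjection_apply_eq_zero_iff _).2 (hT.apply_mem_orthogonal_ker _)
    refine (T.ker.starProjection.hasFDerivAt.comp_hasDerivAt s
      (h.hasDerivAt_velocity s hs)).congr_deriv ?_
    simp [hTX, neg_smul]
  · simpa [Function.comp_def] using (T.ker.starProjection.continuous.tendsto 0).comp hV0

theorem sub_starProjection_ker [CompleteSpace E] (h : IsNesterovFlow T X V)
    (hT : (T : E →ₗ[ℝ] E).IsSymmetric) (hV0 : Tendsto V (𝓝[>] 0) (𝓝 0)) :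
    IsNesterovFlow T (fun t => X t - T.ker.starProjection (X t)) V where
  hasDerivAt_trajectory t ht := by
    refine ((h.hasDerivAt_trajectory t ht).sub (T.ker.starProjection.hasFDerivAt.comp_hasDerivAt
      t (h.hasDerivAt_trajectory t ht))).congr_deriv ?_
    simp [h.starProjection_ker_velocity hT hV0 ht]
  hasDerivAt_velocity t ht := by
    have : T (T.ker.starProjection (X t)) = 0 := T.ker.starProjection_apply_mem _
    simpa [this] using h.hasDerivAt_velocity t ht

theorem hasDerivAt_nesterovLyapunov (h : IsNesterovFlow T X V)
    (hT : (T : E →ₗ[ℝ] E).IsSymmetric) {t : ℝ} (ht : 0 < t) :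
    HasDerivAt (fun s => nesterovLyapunov T s (X s) (V s)) (3 / 2 * ‖X t‖ ^ 2) t := by
  have hX := h.hasDerivAt_trajectory t ht
  have hV := h.hasDerivAt_velocity t ht
  have hTX : HasDerivAt (fun s => T (X s)) (T (V t)) t := T.hasFDerivAt.comp_hasDerivAt t hX
  refine ((((hasDerivAt_pow 3 t).mul (hV.norm_sq.add (hTX.inner ℝ hX))).add
    (((hasDerivAt_pow 2 t).const_mul 3).mul (hV.inner ℝ hX))).add
    (((hasDerivAt_id' t).const_mul (3 / 2)).mul hX.norm_sq)).congr_deriv ?_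
  have hsymm : ⟪T (V t), X t⟫ = ⟪V t, T (X t)⟫ := hT (V t) (X t)
  simp only [Pi.add_apply, inner_neg_right, inner_add_right, inner_neg_left, inner_add_left,
    real_inner_smul_right, real_inner_smul_left, real_inner_self_eq_norm_sq, hsymm,
    real_inner_comm (X t) (V t), real_inner_comm (T (X t)) (V t)]
  field_simp
  ring

theorem nesterovLyapunov_le (h : IsNesterovFlow T X V) (hT : (T : E →ₗ[ℝ] E).IsSymmetric)
    {μ a : ℝ} (ha : 0 < a) (hμa : 3 ≤ μ * a ^ 2)
    (hcoer : ∀ t > 0, μ * ‖X t‖ ^ 2 ≤ ⟪T (X t), X t⟫) {t : ℝ} (ht : a ≤ t) :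
    nesterovLyapunov T t (X t) (V t) ≤
      nesterovLyapunov T a (X a) (V a) * Real.exp (μ⁻¹ / a ^ 2) := by
  have hμ : 0 < μ := by nlinarith [sq_nonneg a]
  have hbound : ∀ s ≥ a, 3 / 4 * μ * s ^ 3 * ‖X s‖ ^ 2 ≤ nesterovLyapunov T s (X s) (V s) :=
    fun s hs => by
      have hs0 : 0 < s := ha.trans_le hs
      have hμs : 3 ≤ μ * s ^ 2 := hμa.trans (by gcongr)
      have := add_le_nesterovLyapunov (V s) hs0.le hμs (hcoer s hs0)
      have : 0 ≤ s * ‖s • V s + (3 / 2 : ℝ) • X s‖ ^ 2 := by positivity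
      linarith
  have hL0 : 0 ≤ nesterovLyapunov T t (X t) (V t) :=
    (hbound t ht).trans' (by have := ha.trans_le ht; positivity)
  calc nesterovLyapunov T t (X t) (V t)
      ≤ nesterovLyapunov T t (X t) (V t) * Real.exp (μ⁻¹ / t ^ 2) :=
        le_mul_of_one_le_right hL0 (Real.one_le_exp (by positivity))
    _ ≤ _ := mul_exp_le_of_hasDerivAt_le ha
        (fun s hs => h.hasDerivAt_nesterovLyapunov hT (ha.trans_le hs))
        (fun s hs => by
          have hs0 : 0 < s := ha.trans_le hs
          calc 3 / 2 * ‖X s‖ ^ 2 = 2 * μ⁻¹ / s ^ 3 * (3 / 4 * μ * s ^ 3 * ‖X s‖ ^ 2) := by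
                field_simp; ring
            _ ≤ _ := by gcongr; exact hbound s hs) ht

theorem integrableOn_Ioi_velocity (h : IsNesterovFlow T X V)
    (hT : (T : E →ₗ[ℝ] E).IsSymmetric) {μ : ℝ} (hμ : 0 < μ)
    (hcoer : ∀ t > 0, μ * ‖X t‖ ^ 2 ≤ ⟪T (X t), X t⟫) :
    IntegrableOn V (Ioi (1 + 3 / μ)) := by
  set a := 1 + 3 / μ
  have ha : 1 ≤ a := le_add_of_nonneg_right (by positivity)
  have hμt : ∀ t ≥ a, 3 ≤ μ * t ^ 2 := fun t ht => by
    have : μ * a = μ + 3 := by rw [mul_add, mul_one, mul_div_cancel₀ _ hμ.ne']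
    nlinarith
  set K := 2 * (1 + 3 / μ) *
    (nesterovLyapunov T a (X a) (V a) * Real.exp (μ⁻¹ / a ^ 2))
  have hdecay : ∀ t ∈ Ioi a, ‖V t‖ ≤ √K * t ^ (-(3 / 2) : ℝ) := by
    intro t ht
    have ht1 : 1 ≤ t := ha.trans ht.le
    have hsq : t ^ 3 * ‖V t‖ ^ 2 ≤ K :=
      sq_mul_norm_sq_le_of_nesterovLyapunov_le ht1 (hμt t ht.le) (hcoer t (by linarith))
        (h.nesterovLyapunov_le hT (by linarith) (hμt a le_rfl) hcoer ht.le)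
    have hp : 0 < t ^ ((3 : ℝ) / 2) := by positivity
    have hp2 : (t ^ ((3 : ℝ) / 2)) ^ 2 = t ^ 3 := by
      rw [← Real.rpow_natCast, ← Real.rpow_mul (by linarith)]
      norm_num
    rw [Real.rpow_neg (by linarith), ← div_eq_mul_inv, le_div_iff₀ hp]
    exact Real.le_sqrt_of_sq_le (by rw [mul_pow, hp2]; linarith)
  refine Integrable.mono' ((integrableOn_Ioi_rpow_of_lt (by norm_num) (by positivity)).const_mul _)
    ((h.continuousOn_velocity.mono (Ioi_subset_Ioi (by positivity))).aestronglyMeasurable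
      measurableSet_Ioi) (ae_restrict_of_forall_mem measurableSet_Ioi hdecay)

theorem integrableOn_velocity [FiniteDimensional ℝ E] (h : IsNesterovFlow T X V)
    (hT : T.IsPositive) (hV0 : Tendsto V (𝓝[>] 0) (𝓝 0)) : IntegrableOn V (Ioi 0) := by
  obtain ⟨μ, hμ, hcoer⟩ := hT.exists_pos_mul_norm_sq_le
  have htail := (h.sub_starProjection_ker hT.isSymmetric hV0).integrableOn_Ioi_velocity
    hT.isSymmetric hμ fun t _ => hcoer _ (T.ker.sub_starProjection_mem_orthogonal (X t))
  have hhead : IntegrableOn V (Ioc 0 (1 + 3 / μ)) :=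
    integrableOn_Ioc_of_continuousOn_of_tendsto
      (h.continuousOn_velocity.mono Ioc_subset_Ioi_self) hV0
  rw [← Ioc_union_Ioi_eq_Ioi (by positivity : (0 : ℝ) ≤ 1 + 3 / μ)]
  exact hhead.union htail

end IsNesterovFlow

theorem quadratic_nesterov_flow_rectifiable_general (d : ℕ)
    (Q : Matrix (Fin d) (Fin d) ℝ) (hQpsd : Q.PosSemidef)
    (X X' X'' : ℝ → EuclideanSpace ℝ (Fin d))
    (hX' : ∀ t > (0:ℝ), HasDerivAt X (X' t) t)
    (hX'' : ∀ t > (0:ℝ), HasDerivAt X' (X'' t) t)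
    (hX'0 : Filter.Tendsto X' (nhdsWithin 0 (Set.Ioi 0)) (nhds 0))
    (hODE : ∀ t > (0:ℝ), X'' t + (3 / t) • X' t + Matrix.toEuclideanLin Q (X t) = 0) :
    (∫⁻ t in Set.Ioi (0:ℝ), (‖X' t‖₊ : ENNReal)) < ⊤ := by
  set T := (Matrix.toEuclideanLin Q).toContinuousLinearMap
  have hT : T.IsPositive := Matrix.isPositive_toEuclideanLin_iff.2 hQpsd
  have hflow : IsNesterovFlow T X X' := ⟨hX', fun t ht => (hX'' t ht).congr_deriv
    (eq_neg_of_add_eq_zero_left ((add_assoc _ _ _).symm.trans (hODE t ht)))⟩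
  exact (hflow.integrableOn_velocity hT hX'0).hasFiniteIntegral

/-- for a symmetric positive semidefinite `Q`, any solution of the
critical Nesterov flow `Ẍ(t) + (3/t)·Ẋ(t) + Q·X(t) = 0` with `X(0) = X₀` and
`Ẋ(0⁺) = 0` has finite path length: `∫₀^∞ ‖Ẋ(t)‖ dt < ∞`. -/
theorem quadratic_nesterov_flow_rectifiable (d : ℕ)
    (Q : Matrix (Fin d) (Fin d) ℝ) (hQsymm : Q.IsSymm) (hQpsd : Q.PosSemidef)
    (X₀ : EuclideanSpace ℝ (Fin d)) (X X' X'' : ℝ → EuclideanSpace ℝ (Fin d))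
    (hXcont : ContinuousOn X (Set.Ici 0))
    (hX' : ∀ t > (0:ℝ), HasDerivAt X (X' t) t)
    (hX'' : ∀ t > (0:ℝ), HasDerivAt X' (X'' t) t)
    (hX''cont : ContinuousOn X'' (Set.Ioi 0))
    (hX0 : X 0 = X₀)
    (hX'0 : Filter.Tendsto X' (nhdsWithin 0 (Set.Ioi 0)) (nhds 0))
    (hODE : ∀ t > (0:ℝ), X'' t + (3 / t) • X' t + Matrix.toEuclideanLin Q (X t) = 0) :
    (∫⁻ t in Set.Ioi (0:ℝ), (‖X' t‖₊ : ENNReal)) < ⊤ :=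
  quadratic_nesterov_flow_rectifiable_general d Q hQpsd X X' X'' hX' hX'' hX'0 hODE
end

section
/- Let f : ℝ^d → ℝ be convex and continuously differentiable with f(0) = 0 = min f. Let X : [0,∞) → ℝ^d be continuous, twice continuously differentiable on (0,∞), with X(0) = X₀ and Ẋ(t) → 0 as t → 0⁺, satisfying Ẍ(t) + (3/t)·Ẋ(t) + ∇f(X(t)) = 0 for all t > 0. Then the Lyapunov function ℰ(t) = t²·f(X(t)) + (1/2)·‖2X(t) + t·Ẋ(t)‖² is nonincreasing on [0,∞); in particular ℰ(t) ≤ ℰ(0) = 2‖X₀‖² for all t ≥ 0. -/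
/-!
Along the flow, `2X + tẊ` has derivative `-t∇f(X)` (this is exactly where the damping
coefficient `3` enters), so the Lyapunov function `ℰ(t) = t²f(X) + ½‖2X + tẊ‖²` has derivative
`2t(f(X) - ⟪∇f(X), X⟫)`. Convexity gives `f(X) - f(0) ≤ ⟪∇f(X), X - 0⟫`, so with `f(0) = 0`
this derivative is nonpositive for `t > 0`. The hypothesis `Ẋ(t) → 0` makes `tẊ(t) → 0`,
so `ℰ` is continuous at `0` with `ℰ(0) = ½‖2X₀‖² = 2‖X₀‖²`.
-/

open Set Filter Topology
open scoped RealInnerProductSpace Gradient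

theorem hasDerivAt_nesterov_momentum {F : Type*} [NormedAddCommGroup F] [NormedSpace ℝ F]
    {X X' : ℝ → F} {a g : F} {t : ℝ} (ht : t ≠ 0) (hX : HasDerivAt X (X' t) t)
    (hX' : HasDerivAt X' a t) (hODE : a + (3 / t) • X' t + g = 0) :
    HasDerivAt (fun s => (2 : ℝ) • X s + s • X' s) (-(t • g)) t := by
  have hg : g = -(a + (3 / t) • X' t) := eq_neg_of_add_eq_zero_right hODE
  refine ((hX.const_smul (2 : ℝ)).add ((hasDerivAt_id t).smul hX')).congr_deriv ?_
  rw [hg, smul_neg, neg_neg, smul_add, smul_smul, mul_div_cancel₀ _ ht]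
  simp only [id_eq, one_smul]
  module

theorem continuousWithinAt_Ici_smul_of_tendsto {F : Type*} [NormedAddCommGroup F]
    [NormedSpace ℝ F] {Y : ℝ → F} {v : F} (hY : Tendsto Y (𝓝[>] 0) (𝓝 v)) :
    ContinuousWithinAt (fun s => s • Y s) (Ici 0) 0 := by
  rw [← continuousWithinAt_Ioi_iff_Ici, ContinuousWithinAt]
  simpa using (continuousWithinAt_id.tendsto : Tendsto id (𝓝[>] (0 : ℝ)) (𝓝 0)).smul hY

variable {E : Type*} [NormedAddCommGroup E] [InnerProductSpace ℝ E]

theorem HasGradientAt.comp_hasDerivAt_real [CompleteSpace E] {f : E → ℝ} {g v : E}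
    {γ : ℝ → E} {t : ℝ} (hf : HasGradientAt f g (γ t)) (hγ : HasDerivAt γ v t) :
    HasDerivAt (fun s => f (γ s)) ⟪g, v⟫ t :=
  (hf.hasFDerivAt.comp_hasDerivAt t hγ).congr_deriv (by simp)

theorem ConvexOn.sub_le_inner_of_hasGradientAt [CompleteSpace E] {s : Set E} {f : E → ℝ}
    {g x y : E} (hconv : ConvexOn ℝ s f) (hx : x ∈ s) (hy : y ∈ s)
    (hf : HasGradientAt f g x) :
    f x - f y ≤ ⟪g, x - y⟫ := by
  let γ : ℝ →ᵃ[ℝ] E := AffineMap.lineMap y x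
  have hderiv : HasDerivAt (fun r => f (γ r)) ⟪g, x - y⟫ 1 :=
    HasGradientAt.comp_hasDerivAt_real (by simpa [γ] using hf) AffineMap.hasDerivAt_lineMap
  simpa [slope, γ] using
    (hconv.comp_affineMap γ).slope_le_of_hasDerivAt (by simpa [γ]) (by simpa [γ]) one_pos hderiv

noncomputable def nesterovEnergy (f : E → ℝ) (X X' : ℝ → E) (t : ℝ) : ℝ :=
  t ^ 2 * f (X t) + (1 / 2) * ‖(2 : ℝ) • X t + t • X' t‖ ^ 2

section

variable {f : E → ℝ} {X X' : ℝ → E}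

theorem nesterovEnergy_zero : nesterovEnergy f X X' 0 = 2 * ‖X 0‖ ^ 2 := by
  simp only [nesterovEnergy, zero_smul, add_zero, norm_smul]
  norm_num
  ring

theorem hasDerivAt_nesterovEnergy [CompleteSpace E] {a g : E} {t : ℝ} (ht : t ≠ 0)
    (hf : HasGradientAt f g (X t)) (hX : HasDerivAt X (X' t) t) (hX' : HasDerivAt X' a t)
    (hODE : a + (3 / t) • X' t + g = 0) :
    HasDerivAt (nesterovEnergy f X X') (2 * t * (f (X t) - ⟪g, X t⟫)) t := by
  have hpot := (hasDerivAt_pow 2 t).mul (hf.comp_hasDerivAt_real hX)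
  have hkin := (hasDerivAt_nesterov_momentum ht hX hX' hODE).norm_sq.const_mul (1 / 2 : ℝ)
  refine (hpot.add hkin).congr_deriv ?_
  simp only [inner_neg_right, inner_smul_right, real_inner_comm g, inner_add_right]
  ring

theorem continuousOn_nesterovEnergy {v : E} (hf : Continuous f) (hX : ContinuousOn X (Ici 0))
    (hX' : ContinuousOn X' (Ioi 0)) (hX'0 : Tendsto X' (𝓝[>] 0) (𝓝 v)) :
    ContinuousOn (nesterovEnergy f X X') (Ici 0) := by
  have hmom : ContinuousOn (fun s => s • X' s) (Ici 0) := by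
    intro t ht
    rcases (mem_Ici.mp ht).eq_or_lt with rfl | ht
    · exact continuousWithinAt_Ici_smul_of_tendsto hX'0
    · exact (continuousAt_id.smul (hX'.continuousAt (Ioi_mem_nhds ht))).continuousWithinAt
  exact ((continuous_pow 2).continuousOn.mul (hf.comp_continuousOn hX)).add
    (continuousOn_const.mul (((hX.const_smul (2 : ℝ)).add hmom).norm.pow 2))

theorem antitoneOn_nesterovEnergy [CompleteSpace E] {X'' : ℝ → E} {v : E}
    (hconv : ConvexOn ℝ univ f) (hf : Differentiable ℝ f) (hf0 : f 0 = 0)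
    (hXcont : ContinuousOn X (Ici 0))
    (hX' : ∀ t > 0, HasDerivAt X (X' t) t) (hX'' : ∀ t > 0, HasDerivAt X' (X'' t) t)
    (hX'0 : Tendsto X' (𝓝[>] 0) (𝓝 v))
    (hODE : ∀ t > 0, X'' t + (3 / t) • X' t + ∇ f (X t) = 0) :
    AntitoneOn (nesterovEnergy f X X') (Ici 0) := by
  have hgrad (x : E) : HasGradientAt f (∇ f x) x := (hf x).hasGradientAt
  have hX'cont : ContinuousOn X' (Ioi 0) := fun t ht =>
    (hX'' t ht).continuousAt.continuousWithinAt
  refine antitoneOn_of_hasDerivWithinAt_nonpos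
    (f' := fun t => 2 * t * (f (X t) - ⟪∇ f (X t), X t⟫)) (convex_Ici 0)
    (continuousOn_nesterovEnergy hf.continuous hXcont hX'cont hX'0) (fun t ht => ?_)
    (fun t ht => ?_)
  · rw [interior_Ici] at ht ⊢
    exact (hasDerivAt_nesterovEnergy ht.ne' (hgrad _) (hX' t ht) (hX'' t ht)
      (hODE t ht)).hasDerivWithinAt
  · rw [interior_Ici] at ht
    have hsupport := hconv.sub_le_inner_of_hasGradientAt (mem_univ _) (mem_univ 0) (hgrad (X t))
    rw [hf0, sub_zero, sub_zero] at hsupport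
    exact mul_nonpos_of_nonneg_of_nonpos (by linarith [mem_Ioi.mp ht]) (sub_nonpos.mpr hsupport)

end

theorem nesterov_lyapunov_nonincreasing_general (d : ℕ)
    (f : EuclideanSpace ℝ (Fin d) → ℝ)
    (hconv : ConvexOn ℝ Set.univ f) (hf : ContDiff ℝ 1 f)
    (hf0 : f 0 = 0)
    (X₀ : EuclideanSpace ℝ (Fin d)) (X X' X'' : ℝ → EuclideanSpace ℝ (Fin d))
    (hXcont : ContinuousOn X (Set.Ici 0))
    (hX' : ∀ t > (0:ℝ), HasDerivAt X (X' t) t)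
    (hX'' : ∀ t > (0:ℝ), HasDerivAt X' (X'' t) t)
    (hX0 : X 0 = X₀)
    (hX'0 : Filter.Tendsto X' (nhdsWithin 0 (Set.Ioi 0)) (nhds 0))
    (hODE : ∀ t > (0:ℝ), X'' t + (3 / t) • X' t + gradient f (X t) = 0) :
    AntitoneOn (fun t => t ^ 2 * f (X t) + (1/2) * ‖(2:ℝ) • X t + t • X' t‖ ^ 2)
      (Set.Ici 0) ∧
    ∀ t ≥ (0:ℝ),
      t ^ 2 * f (X t) + (1/2) * ‖(2:ℝ) • X t + t • X' t‖ ^ 2 ≤ 2 * ‖X₀‖ ^ 2 := by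
  have hmono : AntitoneOn (nesterovEnergy f X X') (Ici 0) :=
    antitoneOn_nesterovEnergy hconv (hf.differentiable one_ne_zero) hf0 hXcont hX' hX'' hX'0 hODE
  refine ⟨hmono, fun t ht => ?_⟩
  calc nesterovEnergy f X X' t ≤ nesterovEnergy f X X' 0 := hmono self_mem_Ici ht ht
    _ = 2 * ‖X₀‖ ^ 2 := by rw [nesterovEnergy_zero, hX0]

/-- along a solution of the critical Nesterov flow for a convex `C¹`
potential `f` with `f(0) = 0 = min f`, the Lyapunov function
`ℰ(t) = t²·f(X(t)) + (1/2)·‖2X(t) + t·Ẋ(t)‖²` is nonincreasing on `[0,∞)`,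
and `ℰ(t) ≤ ℰ(0) = 2‖X₀‖²` for all `t ≥ 0`. -/
theorem nesterov_lyapunov_nonincreasing (d : ℕ)
    (f : EuclideanSpace ℝ (Fin d) → ℝ)
    (hconv : ConvexOn ℝ Set.univ f) (hf : ContDiff ℝ 1 f)
    (hf0 : f 0 = 0) (hmin : ∀ x, 0 ≤ f x)
    (X₀ : EuclideanSpace ℝ (Fin d)) (X X' X'' : ℝ → EuclideanSpace ℝ (Fin d))
    (hXcont : ContinuousOn X (Set.Ici 0))
    (hX' : ∀ t > (0:ℝ), HasDerivAt X (X' t) t)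
    (hX'' : ∀ t > (0:ℝ), HasDerivAt X' (X'' t) t)
    (hX''cont : ContinuousOn X'' (Set.Ioi 0))
    (hX0 : X 0 = X₀)
    (hX'0 : Filter.Tendsto X' (nhdsWithin 0 (Set.Ioi 0)) (nhds 0))
    (hODE : ∀ t > (0:ℝ), X'' t + (3 / t) • X' t + gradient f (X t) = 0) :
    AntitoneOn (fun t => t ^ 2 * f (X t) + (1/2) * ‖(2:ℝ) • X t + t • X' t‖ ^ 2)
      (Set.Ici 0) ∧
    ∀ t ≥ (0:ℝ),
      t ^ 2 * f (X t) + (1/2) * ‖(2:ℝ) • X t + t • X' t‖ ^ 2 ≤ 2 * ‖X₀‖ ^ 2 :=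
  nesterov_lyapunov_nonincreasing_general d f hconv hf hf0 X₀ X X' X'' hXcont hX' hX'' hX0 hX'0 hODE
end
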